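/- Every compatible Jacobi field v on the tetrahedral cone T that is homogeneous of degree 1 is generated by a single rotation: there exists one skew-symmetric linear map A : ℝ³ → ℝ³ such that v(ab)(x) = π_{P(ab)^⊥}(Ax) for all x ∈ W(ab) and every pair ab. -/

import Mathlib

/-!
STATEMENT 10: Every compatible Jacobi field `v` on the tetrahedral cone `T` that is
homogeneous of degree 1 is generated by a single rotation: there exists one skew-symmetric
linear map `A : ℝ³ → ℝ³` such that `v(ab)(x) = π_{P(ab)^⊥}(Ax)` for all `x ∈ W(ab)`
and every pair `ab`.
-/
noncomputable section

open Real MeasureTheory Metric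
open scoped RealInnerProductSpace

/-- Euclidean 3-space. -/
abbrev E3 : Type := EuclideanSpace ℝ (Fin 3)

/-- The four vertices of the tetrahedral net. -/
def tp : Fin 4 → E3
  | 0 => (EuclideanSpace.equiv (Fin 3) ℝ).symm ![1, 0, 0]
  | 1 => (EuclideanSpace.equiv (Fin 3) ℝ).symm ![-1/3, 2 * Real.sqrt 2 / 3, 0]
  | 2 => (EuclideanSpace.equiv (Fin 3) ℝ).symm ![-1/3, -Real.sqrt 2 / 3, Real.sqrt 6 / 3]
  | 3 => (EuclideanSpace.equiv (Fin 3) ℝ).symm ![-1/3, -Real.sqrt 2 / 3, -Real.sqrt 6 / 3]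

/-- The wedge `W(ab) = {s • p_a + t • p_b : s, t ≥ 0}`. -/
def Wdg (a b : Fin 4) : Set E3 := {x | ∃ s t : ℝ, 0 ≤ s ∧ 0 ≤ t ∧ x = s • tp a + t • tp b}

/-- The plane `P(ab) = span(p_a, p_b)`. -/
def Pl (a b : Fin 4) : Submodule ℝ E3 := Submodule.span ℝ {tp a, tp b}

/-- The junction ray `L(a) = {t • p_a : t ≥ 0}`. -/
def ray (a : Fin 4) : Set E3 := {x | ∃ t : ℝ, 0 ≤ t ∧ x = t • tp a}

/-- Unit tangent at `tp a` towards `tp b`; `(tp a, tang a b)` is an orthonormal basis of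
the plane `P(ab)`. -/
def tang (a b : Fin 4) : E3 := (2 * Real.sqrt 2)⁻¹ • (tp a + (3:ℝ) • tp b)

/-- The outward unit conormal of `W(ab)` along `L(a)`, `n_a(ab) = −(p_a+3p_b)/(2√2)`. -/
def conormal (a b : Fin 4) : E3 := -tang a b

/-- A linear map `A : ℝ³ → ℝ³` is skew-symmetric if `⟪Ax, y⟫ = −⟪x, Ay⟫` for all `x, y`. -/
def IsSkew (A : E3 →ₗ[ℝ] E3) : Prop := ∀ x y : E3, ⟪A x, y⟫ = -⟪x, A y⟫

/-- The Laplacian of `f` along the plane `P(ab)`, computed (within the set `s`) using the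
orthonormal basis `(tp a, tang a b)` of `P(ab)`. -/
def lapT (a b : Fin 4) (f : E3 → E3) (s : Set E3) (x : E3) : E3 :=
  lineDerivWithin ℝ (fun y => lineDerivWithin ℝ f s y (tp a)) s x (tp a)
  + lineDerivWithin ℝ (fun y => lineDerivWithin ℝ f s y (tang a b)) s x (tang a b)

/-- A compatible Jacobi field on the tetrahedral cone `T`: a collection of functions
`v(ab) : W(ab) → P(ab)^⊥` (the two orders `ab`, `ba` agreeing on the wedge) such that
(A) each `v(ab)` is smooth on `W(ab) ∖ {0}` (up to the boundary rays) and harmonic there,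
(B) along each punctured junction ray `L(a) ∖ {0}` there is a single vector `V(z) ∈ ℝ³`
with `v(ab)(z) = π_{P(ab)^⊥}(V(z))` for all `b ≠ a`, and
(C) the conormal derivatives of the three wedges meeting at `L(a)` sum to zero. -/
def IsCompatibleJacobiT (v : Fin 4 → Fin 4 → E3 → E3) : Prop :=
  (∀ a b, ∀ x ∈ Wdg a b, v a b x = v b a x) ∧
  (∀ a b, a ≠ b → ∀ x ∈ Wdg a b, v a b x ∈ (Pl a b)ᗮ) ∧
  (∀ a b, a ≠ b → ContDiffOn ℝ (⊤ : ℕ∞) (v a b) (Wdg a b \ {0})) ∧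
  (∀ a b, a ≠ b → ∀ x ∈ Wdg a b \ {0}, lapT a b (v a b) (Wdg a b) x = 0) ∧
  (∀ a : Fin 4, ∀ z ∈ ray a \ {0}, ∃ V : E3, ∀ b, b ≠ a →
      v a b z = (Submodule.orthogonalProjectionOnto (Pl a b)ᗮ V : E3)) ∧
  (∀ a : Fin 4, ∀ z ∈ ray a \ {0},
      ∑ b ∈ Finset.univ.erase a,
        lineDerivWithin ℝ (v a b) (Wdg a b) z (conormal a b) = 0)

/-- Homogeneity of degree one: `v(ab)(λ z) = λ v(ab)(z)` for `λ > 0`, `z ∈ W(ab)`. -/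
def IsHomogeneousOneT (v : Fin 4 → Fin 4 → E3 → E3) : Prop :=
  ∀ a b, a ≠ b → ∀ x ∈ Wdg a b, ∀ lam : ℝ, 0 < lam → v a b (lam • x) = lam • v a b x

/-! ### Auxiliary numerical facts -/

lemma sq2 : Real.sqrt 2 * Real.sqrt 2 = 2 := Real.mul_self_sqrt (by norm_num)
lemma sq6 : Real.sqrt 6 * Real.sqrt 6 = 6 := Real.mul_self_sqrt (by norm_num)

lemma inner_tp : ∀ a b : Fin 4, ⟪tp a, tp b⟫ = if a = b then 1 else -1/3 := by
  intro a b
  fin_cases a <;> fin_cases b <;>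
    simp only [PiLp.inner_apply] <;> simp [tp, Fin.sum_univ_three] <;> nlinarith [sq2, sq6]

lemma sum_tp : tp 0 + tp 1 + tp 2 + tp 3 = 0 := by
  ext i
  fin_cases i <;> simp [tp] <;> ring

lemma tp_ne (a : Fin 4) : tp a ≠ 0 := by
  intro h
  have h1 := inner_tp a a
  rw [h, if_pos rfl] at h1
  simp at h1

/-! ### The cross product on `E3` -/

/-- Cross product on `E3`. -/
def crs (x y : E3) : E3 := (EuclideanSpace.equiv (Fin 3) ℝ).symm
  ![x 1 * y 2 - x 2 * y 1, x 2 * y 0 - x 0 * y 2, x 0 * y 1 - x 1 * y 0]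

lemma inner_crs_left (x y : E3) : ⟪x, crs x y⟫ = 0 := by
  simp [crs, PiLp.inner_apply, Fin.sum_univ_three]; ring

lemma inner_crs_right (x y : E3) : ⟪y, crs x y⟫ = 0 := by
  simp [crs, PiLp.inner_apply, Fin.sum_univ_three]; ring

lemma crs_dot_crs (a b c d : E3) :
    ⟪crs a b, crs c d⟫ = ⟪a,c⟫*⟪b,d⟫ - ⟪a,d⟫*⟪b,c⟫ := by
  simp [crs, PiLp.inner_apply, Fin.sum_univ_three]; ring

lemma crs_skew (w x y : E3) : ⟪crs w x, y⟫ = -⟪x, crs w y⟫ := by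
  simp [crs, PiLp.inner_apply, Fin.sum_univ_three]; ring

lemma crs_add_right (x y z : E3) : crs x (y + z) = crs x y + crs x z := by
  ext i; fin_cases i <;> simp [crs] <;> ring

lemma crs_smul_right (c : ℝ) (x y : E3) : crs x (c • y) = c • crs x y := by
  ext i; fin_cases i <;> simp [crs] <;> ring

lemma crs_anticomm (x y : E3) : crs y x = - crs x y := by
  ext i; fin_cases i <;> simp [crs] <;> ring

lemma crs_self (x : E3) : crs x x = 0 := by
  ext i; fin_cases i <;> simp [crs] <;> ring

lemma triple_crs (x y w : E3) : crs (crs x y) w = ⟪x,w⟫ • y - ⟪y,w⟫ • x := by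
  ext i; fin_cases i <;> simp [crs, PiLp.inner_apply, Fin.sum_univ_three] <;> ring

lemma crs_eq_zero {u w : E3} (hu : ⟪u,u⟫ ≠ 0) (h : crs u w = 0) :
    w = (⟪u,w⟫/⟪u,u⟫) • u := by
  have h2 : ⟪u,u⟫*⟪w,w⟫ - ⟪u,w⟫*⟪w,u⟫ = 0 := by
    rw [← crs_dot_crs, h]; simp
  have key : ⟪w - (⟪u,w⟫/⟪u,u⟫) • u, w - (⟪u,w⟫/⟪u,u⟫) • u⟫ = 0 := by
    simp only [inner_sub_sub_self, real_inner_smul_left, real_inner_smul_right]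
    have hc : ⟪w,u⟫ = ⟪u,w⟫ := real_inner_comm u w
    rw [hc] at h2 ⊢
    generalize hA : ⟪u,u⟫ = A at *
    generalize hB : ⟪u,w⟫ = B at *
    generalize hC : ⟪w,w⟫ = C at *
    field_simp
    nlinarith [h2]
  exact sub_eq_zero.mp (inner_self_eq_zero.mp key)

/-! ### The unit normals of the six planes -/

/-- The unit normal of the plane `P(ab)`. -/
def Nu (a b : Fin 4) : E3 := (3 / (2 * Real.sqrt 2)) • crs (tp a) (tp b)

lemma s0_sq : (3 / (2 * Real.sqrt 2)) * (3 / (2 * Real.sqrt 2)) = 9/8 := by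
  have h2 : Real.sqrt 2 * Real.sqrt 2 = 2 := sq2
  have : (2 * Real.sqrt 2) * (2 * Real.sqrt 2) = 8 := by nlinarith
  rw [div_mul_div_comm, this]; norm_num

lemma s0_ne : (3 / (2 * Real.sqrt 2)) ≠ 0 := by
  intro hc
  have := s0_sq; rw [hc] at this; norm_num at this

lemma crs_tp_self (a b : Fin 4) (hab : a ≠ b) :
    ⟪crs (tp a) (tp b), crs (tp a) (tp b)⟫ = 8/9 := by
  rw [crs_dot_crs, inner_tp, inner_tp, inner_tp, inner_tp]
  simp [hab, hab.symm]; norm_num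

lemma nu_unit (a b : Fin 4) (hab : a ≠ b) : ⟪Nu a b, Nu a b⟫ = 1 := by
  rw [Nu, real_inner_smul_left, real_inner_smul_right, crs_tp_self a b hab, ← mul_assoc, s0_sq]
  norm_num

lemma inner_tp_nu_left (a b : Fin 4) : ⟪tp a, Nu a b⟫ = 0 := by
  rw [Nu, real_inner_smul_right, inner_crs_left]; ring

lemma inner_tp_nu_right (a b : Fin 4) : ⟪tp b, Nu a b⟫ = 0 := by
  rw [Nu, real_inner_smul_right, inner_crs_right]; ring

lemma nu_ba (a b : Fin 4) : Nu b a = - Nu a b := by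
  rw [Nu, Nu, crs_anticomm, smul_neg]

lemma mem_perp_iff {a b : Fin 4} (hab : a ≠ b) (w : E3) :
    w ∈ (Pl a b)ᗮ ↔ ∃ c : ℝ, w = c • Nu a b := by
  constructor
  · intro hw
    have ha : ⟪tp a, w⟫ = 0 := hw (tp a) (Submodule.subset_span (by simp))
    have hb : ⟪tp b, w⟫ = 0 := hw (tp b) (Submodule.subset_span (by simp))
    have h0 : crs (crs (tp a) (tp b)) w = 0 := by
      rw [triple_crs, ha, hb]; simp
    have h8 : ⟪crs (tp a) (tp b), crs (tp a) (tp b)⟫ ≠ 0 := by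
      rw [crs_tp_self a b hab]; norm_num
    refine ⟨(⟪crs (tp a) (tp b), w⟫ / ⟪crs (tp a) (tp b), crs (tp a) (tp b)⟫)
      / (3 / (2 * Real.sqrt 2)), ?_⟩
    conv_lhs => rw [crs_eq_zero h8 h0]
    rw [Nu, smul_smul, div_mul_cancel₀ _ s0_ne]
  · rintro ⟨c, rfl⟩
    intro u hu
    obtain ⟨s, t, rfl⟩ := Submodule.mem_span_pair.mp hu
    rw [inner_add_left, real_inner_smul_left, real_inner_smul_left,
      real_inner_smul_right, real_inner_smul_right, inner_tp_nu_left, inner_tp_nu_right]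
    ring

lemma proj_perp {a b : Fin 4} (hab : a ≠ b) (w : E3) :
    (Submodule.orthogonalProjectionOnto (Pl a b)ᗮ w : E3) = ⟪w, Nu a b⟫ • Nu a b := by
  apply Submodule.eq_starProjection_of_mem_of_inner_eq_zero
  · exact (mem_perp_iff hab _).mpr ⟨⟪w, Nu a b⟫, rfl⟩
  · intro z hz
    obtain ⟨c, rfl⟩ := (mem_perp_iff hab z).mp hz
    rw [inner_sub_left, real_inner_smul_right, real_inner_smul_right,
      real_inner_smul_left, nu_unit a b hab]
    ring

lemma nu_sum {a b b' b'' : Fin 4} (h1 : a ≠ b) (h2 : a ≠ b') (h3 : a ≠ b'')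
    (h4 : b ≠ b') (h5 : b ≠ b'') (h6 : b' ≠ b'') :
    Nu a b + Nu a b' + Nu a b'' = 0 := by
  have hsum : tp b + tp b' + tp b'' = - tp a := by
    have h := sum_tp
    fin_cases a <;> fin_cases b <;> fin_cases b' <;> fin_cases b'' <;>
      simp_all <;> linear_combination (norm := module) h
  have hre : Nu a b + Nu a b' + Nu a b''
      = (3 / (2 * Real.sqrt 2)) • crs (tp a) (tp b + tp b' + tp b'') := by
    rw [crs_add_right, crs_add_right, Nu, Nu, Nu]
    module
  have hz : crs (tp a) (-tp a) = 0 := by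
    have h := crs_smul_right (-1) (tp a) (tp a)
    simp only [neg_smul, one_smul] at h
    rw [h, crs_self, neg_zero]
  rw [hre, hsum, hz, smul_zero]

lemma nu_indep {a b b' : Fin 4} (h1 : a ≠ b) (h2 : a ≠ b') (h3 : b ≠ b')
    {r s : ℝ} (h : r • Nu a b + s • Nu a b' = 0) : r = 0 ∧ s = 0 := by
  have hw : crs (tp a) (r • tp b + s • tp b') = 0 := by
    have hexp : r • Nu a b + s • Nu a b'
        = (3 / (2 * Real.sqrt 2)) • crs (tp a) (r • tp b + s • tp b') := by
      rw [crs_add_right, crs_smul_right, crs_smul_right, Nu, Nu]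
      module
    rw [hexp] at h
    rcases smul_eq_zero.mp h with hc | hc
    · exact absurd hc s0_ne
    · exact hc
  have h8 : ⟪tp a, tp a⟫ ≠ 0 := by rw [inner_tp, if_pos rfl]; norm_num
  have hpar := crs_eq_zero h8 hw
  have e1 : ⟪tp b, r • tp b + s • tp b'⟫ = r - s/3 := by
    rw [inner_add_right, real_inner_smul_right, real_inner_smul_right,
      inner_tp, inner_tp, if_pos rfl, if_neg h3]
    ring
  have e2 : ⟪tp b', r • tp b + s • tp b'⟫ = -r/3 + s := by
    rw [inner_add_right, real_inner_smul_right, real_inner_smul_right,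
      inner_tp, inner_tp, if_pos rfl, if_neg (Ne.symm h3)]
    ring
  have e0 : ⟪tp a, r • tp b + s • tp b'⟫ = -r/3 - s/3 := by
    rw [inner_add_right, real_inner_smul_right, real_inner_smul_right,
      inner_tp, inner_tp, if_neg h1, if_neg h2]
    ring
  have e1' : ⟪tp b, r • tp b + s • tp b'⟫
      = (⟪tp a, r • tp b + s • tp b'⟫/⟪tp a, tp a⟫) * ⟪tp b, tp a⟫ := by
    conv_lhs => rw [hpar]
    rw [real_inner_smul_right]
  have e2' : ⟪tp b', r • tp b + s • tp b'⟫
      = (⟪tp a, r • tp b + s • tp b'⟫/⟪tp a, tp a⟫) * ⟪tp b', tp a⟫ := by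
    conv_lhs => rw [hpar]
    rw [real_inner_smul_right]
  rw [e1, e0, inner_tp, inner_tp, if_pos rfl, if_neg (Ne.symm h1)] at e1'
  rw [e2, e0, inner_tp, inner_tp, if_pos rfl, if_neg (Ne.symm h2)] at e2'
  norm_num at e1' e2'
  constructor <;> linarith

lemma three_rel {a b b' b'' : Fin 4} (h1 : a ≠ b) (h2 : a ≠ b') (h3 : a ≠ b'')
    (h4 : b ≠ b') (h5 : b ≠ b'') (h6 : b' ≠ b'') {C₁ C₂ C₃ : ℝ}
    (hsum : C₁ • Nu a b + C₂ • Nu a b' + C₃ • Nu a b'' = 0) : C₁ = C₂ ∧ C₂ = C₃ := by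
  have hns := nu_sum h1 h2 h3 h4 h5 h6
  have h3' : Nu a b'' = - Nu a b - Nu a b' := by
    rw [eq_sub_iff_add_eq, eq_neg_iff_add_eq_zero]
    linear_combination (norm := module) hns
  have h4' : (C₁ - C₃) • Nu a b + (C₂ - C₃) • Nu a b' = 0 := by
    rw [← hsum, h3']
    module
  obtain ⟨g1, g2⟩ := nu_indep h1 h2 h4 h4'
  constructor <;> linarith

/-! ### The analytic core: one-homogeneous harmonic functions on a quadrant are linear -/

section Core
open Set
variable {F : Type*} [NormedAddCommGroup F] [NormedSpace ℝ F]

/-- the closed first quadrant -/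
def SQ : Set (ℝ × ℝ) := {p | 0 ≤ p.1 ∧ 0 ≤ p.2}
/-- the open first quadrant -/
def QQ : Set (ℝ × ℝ) := {p | 0 < p.1 ∧ 0 < p.2}

lemma QQ_open : IsOpen QQ :=
  (isOpen_lt continuous_const continuous_fst).inter (isOpen_lt continuous_const continuous_snd)

lemma QQ_sub : QQ ⊆ SQ \ {0} := by
  rintro ⟨p1, p2⟩ ⟨h1, h2⟩
  refine ⟨⟨le_of_lt h1, le_of_lt h2⟩, ?_⟩
  simp only [mem_singleton_iff, Prod.mk_eq_zero]
  rintro ⟨rfl, -⟩; exact lt_irrefl 0 h1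

lemma QQ_smul {l : ℝ} (hl : 0 < l) {x : ℝ × ℝ} (hx : x ∈ QQ) : l • x ∈ QQ :=
  ⟨mul_pos hl hx.1, mul_pos hl hx.2⟩

lemma SQ_conv : Convex ℝ SQ :=
  (convex_halfSpace_ge (LinearMap.isLinear (LinearMap.fst ℝ ℝ ℝ)) 0).inter
    (convex_halfSpace_ge (LinearMap.isLinear (LinearMap.snd ℝ ℝ ℝ)) 0)

lemma QQ_conv : Convex ℝ QQ :=
  (convex_halfSpace_gt (LinearMap.isLinear (LinearMap.fst ℝ ℝ ℝ)) 0).inter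
    (convex_halfSpace_gt (LinearMap.isLinear (LinearMap.snd ℝ ℝ ℝ)) 0)

lemma SQ_mem_nhds {x : ℝ × ℝ} (hx : x ∈ QQ) : SQ ∈ nhds x :=
  Filter.mem_of_superset (QQ_open.mem_nhds hx) (fun y hy => (QQ_sub hy).1)

lemma SQ0_mem_nhds {x : ℝ × ℝ} (hx : x ∈ QQ) : SQ \ {0} ∈ nhds x :=
  Filter.mem_of_superset (QQ_open.mem_nhds hx) QQ_sub

set_option maxHeartbeats 1000000 in
theorem core (G : ℝ × ℝ → F) (d₂ : ℝ × ℝ) (hd : d₂.2 ≠ 0)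
    (hG : ContDiffOn ℝ (⊤ : ℕ∞) G (SQ \ {0}))
    (hhom : ∀ y ∈ SQ, ∀ l : ℝ, 0 < l → G (l • y) = l • G y)
    (hlap : ∀ x ∈ SQ \ {0},
      lineDerivWithin ℝ (fun z => lineDerivWithin ℝ G SQ z (1,0)) SQ x (1,0)
      + lineDerivWithin ℝ (fun z => lineDerivWithin ℝ G SQ z d₂) SQ x d₂ = 0) :
    ∃ c₁ c₂ : F, ∀ y ∈ SQ, G y = y.1 • c₁ + y.2 • c₂ := by
  classical
  -- smoothness on the open quadrant
  have hQ : ∀ x ∈ QQ, ContDiffAt ℝ (⊤ : ℕ∞) G x := fun x hx =>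
    (hG x (QQ_sub hx)).contDiffAt (SQ0_mem_nhds hx)
  have hdiff : ∀ x ∈ QQ, DifferentiableAt ℝ G x := fun x hx =>
    (hQ x hx).differentiableAt (by simpa using WithTop.coe_le_coe.mpr (le_top : (1:ℕ∞) ≤ ⊤))
  set Φ : ℝ × ℝ → (ℝ × ℝ) →L[ℝ] F := fun y => fderiv ℝ G y with hΦ
  have hfd : ∀ x ∈ QQ, HasFDerivAt G (Φ x) x := fun x hx => (hdiff x hx).hasFDerivAt
  have hΦdiff : ∀ x ∈ QQ, DifferentiableAt ℝ Φ x := by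
    intro x hx
    have h2 : ContDiffAt ℝ 2 G x := (hQ x hx).of_le (by simpa using WithTop.coe_le_coe.mpr (le_top : (2:ℕ∞) ≤ ⊤))
    exact (h2.fderiv_right (m := 1) (by norm_num)).differentiableAt one_ne_zero
  -- 0-homogeneity of the derivative
  have key : ∀ x ∈ QQ, ∀ l : ℝ, 0 < l → Φ (l • x) = Φ x := by
    intro x hx l hl
    have hGl : (fun y => G (l • y)) =ᶠ[nhds x] (fun y => l • G y) := by
      filter_upwards [QQ_open.mem_nhds hx] with y hy
      exact hhom y (QQ_sub hy).1 l hl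
    have h1 : HasFDerivAt (fun y => G (l • y))
        ((Φ (l • x)).comp (l • ContinuousLinearMap.id ℝ (ℝ × ℝ))) x :=
      (hfd (l • x) (QQ_smul hl hx)).comp x ((hasFDerivAt_id x).const_smul l)
    have h2 : HasFDerivAt (fun y => l • G y) (l • Φ x) x := (hfd x hx).const_smul l
    have h3 := (h1.congr_of_eventuallyEq hGl.symm ).unique h2
    refine ContinuousLinearMap.ext fun e => ?_
    have := congrArg (fun (L : (ℝ × ℝ) →L[ℝ] F) => L e) h3
    simp only [ContinuousLinearMap.comp_apply, ContinuousLinearMap.smul_apply,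
      ContinuousLinearMap.coe_id', id_eq, _root_.map_smul] at this ⊢
    exact smul_right_injective F (ne_of_gt hl) this
  -- radial second derivative vanishes
  have hMx : ∀ x ∈ QQ, (fderiv ℝ Φ x) x = 0 := by
    intro x hx
    have hM : HasFDerivAt Φ (fderiv ℝ Φ x) x := (hΦdiff x hx).hasFDerivAt
    have hline : HasDerivAt (fun t : ℝ => x + t • x) x 0 := by
      simpa using ((hasDerivAt_id (0:ℝ)).smul_const x).const_add x
    have hM' : HasFDerivAt Φ (fderiv ℝ Φ x) (x + (0:ℝ) • x) := by simpa using hM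
    have h2 : HasDerivAt (fun t : ℝ => Φ (x + t • x)) ((fderiv ℝ Φ x) x) 0 :=
      hM'.comp_hasDerivAt 0 hline
    have h1 : (fun t : ℝ => Φ (x + t • x)) =ᶠ[nhds (0:ℝ)] (fun _ => Φ x) := by
      have hIoo : Set.Ioo (-1:ℝ) 1 ∈ nhds (0:ℝ) := Ioo_mem_nhds (by norm_num) (by norm_num)
      filter_upwards [hIoo] with t ht
      have hpos : 0 < 1 + t := by linarith [ht.1]
      have : x + t • x = (1 + t) • x := by rw [add_smul, one_smul]
      rw [this, key x hx (1 + t) hpos]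
    have h0 : HasDerivAt (fun t : ℝ => Φ (x + t • x)) 0 0 :=
      (hasDerivAt_const (0:ℝ) (Φ x)).congr_of_eventuallyEq h1
    exact h2.unique h0
  -- identify lineDerivWithin with second derivative on QQ
  have hsecond : ∀ x ∈ QQ, ∀ d : ℝ × ℝ,
      lineDerivWithin ℝ (fun z => lineDerivWithin ℝ G SQ z d) SQ x d
        = (fderiv ℝ Φ x) d d := by
    intro x hx d
    have hM : HasFDerivAt Φ (fderiv ℝ Φ x) x := (hΦdiff x hx).hasFDerivAt
    have hinner : ∀ y ∈ QQ, lineDerivWithin ℝ G SQ y d = Φ y d := by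
      intro y hy
      rw [lineDerivWithin_of_mem_nhds (SQ_mem_nhds hy)]
      exact (hdiff y hy).lineDeriv_eq_fderiv
    rw [lineDerivWithin_of_mem_nhds (SQ_mem_nhds hx)]
    have hev : (fun t : ℝ => (fun z => lineDerivWithin ℝ G SQ z d) (x + t • d))
        =ᶠ[nhds (0:ℝ)] (fun t : ℝ => Φ (x + t • d) d) := by
      have hcont : Continuous (fun t : ℝ => x + t • d) :=
        continuous_const.add (continuous_id.smul continuous_const)
      have : ∀ᶠ t : ℝ in nhds 0, (x + t • d) ∈ QQ := by
        have htend : Filter.Tendsto (fun t : ℝ => x + t • d) (nhds 0) (nhds x) := by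
          simpa using hcont.tendsto (0:ℝ)
        exact htend.eventually (QQ_open.eventually_mem hx)
      filter_upwards [this] with t ht
      exact hinner _ ht
    rw [lineDeriv, hev.deriv_eq]
    have hline : HasDerivAt (fun t : ℝ => x + t • d) d 0 := by
      simpa using ((hasDerivAt_id (0:ℝ)).smul_const d).const_add x
    have hM' : HasFDerivAt Φ (fderiv ℝ Φ x) (x + (0:ℝ) • d) := by simpa using hM
    have h2 : HasDerivAt (fun t : ℝ => Φ (x + t • d)) ((fderiv ℝ Φ x) d) 0 :=
      hM'.comp_hasDerivAt 0 hline
    have h3 : HasDerivAt (fun t : ℝ => Φ (x + t • d) d) ((fderiv ℝ Φ x) d d) 0 :=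
      ((ContinuousLinearMap.apply ℝ F d).hasFDerivAt.comp_hasDerivAt 0 h2)
    exact h3.deriv
  -- the full second derivative vanishes on QQ
  have hM0 : ∀ x ∈ QQ, fderiv ℝ Φ x = 0 := by
    intro x hx
    set M := fderiv ℝ Φ x with hMdef
    have hsym : ∀ v w, M v w = M w v := fun v w =>
      second_derivative_symmetric_of_eventually_of_real
        (Filter.eventually_of_mem (QQ_open.mem_nhds hx) (fun y hy => hfd y hy))
        (hΦdiff x hx).hasFDerivAt v w
    have htr : M (1,0) (1,0) + M d₂ d₂ = 0 := by
      have h := hlap x (QQ_sub hx)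
      rwa [hsecond x hx (1,0), hsecond x hx d₂] at h
    have hdec : ∀ z : ℝ × ℝ,
        z = (z.1 - (z.2/d₂.2) * d₂.1) • ((1:ℝ),(0:ℝ)) + (z.2/d₂.2) • d₂ := by
      intro z
      have h1 : (z.2/d₂.2) * d₂.2 = z.2 := div_mul_cancel₀ _ hd
      apply Prod.ext <;> simp [h1] <;> ring
    have hx0 : x ≠ 0 := fun h => by rw [h] at hx; exact lt_irrefl 0 hx.1
    set α := x.1 - (x.2/d₂.2) * d₂.1 with hα
    set β := x.2/d₂.2 with hβ
    have hxd : x = α • ((1:ℝ),(0:ℝ)) + β • d₂ := hdec x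
    have hne : α ≠ 0 ∨ β ≠ 0 := by
      by_contra h
      push_neg at h
      exact hx0 (by rw [hxd, h.1, h.2]; simp)
    have heq : ∀ e, α • M (1,0) e + β • M d₂ e = 0 := by
      intro e
      have h : M x e = 0 := by rw [hMx x hx]; rfl
      rw [hxd, _root_.map_add, _root_.map_smul, _root_.map_smul] at h
      simpa only [ContinuousLinearMap.add_apply, ContinuousLinearMap.smul_apply] using h
    have eq1 : α • M (1,0) (1,0) + β • M (1,0) d₂ = 0 := by
      have := heq (1,0); rwa [hsym d₂ (1,0)] at this
    have eq2 : α • M (1,0) d₂ - β • M (1,0) (1,0) = 0 := by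
      have h := heq d₂
      have hC : M d₂ d₂ = - M (1,0) (1,0) := by
        rw [eq_neg_iff_add_eq_zero, add_comm]; exact htr
      rw [hC] at h
      rw [← h]; module
    have hss : α * α + β * β ≠ 0 := by
      have hpos : 0 < α * α + β * β := by
        rcases hne with h | h
        · nlinarith [mul_self_pos.mpr h, mul_self_nonneg β]
        · nlinarith [mul_self_pos.mpr h, mul_self_nonneg α]
      exact hpos.ne'
    have hA : M (1,0) (1,0) = 0 := by
      have e1 : (α*α) • M (1,0) (1,0) + (α*β) • M (1,0) d₂ = 0 := by
        have := congrArg (α • ·) eq1; simpa [smul_add, smul_smul] using this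
      have e2 : (α*β) • M (1,0) d₂ - (β*β) • M (1,0) (1,0) = 0 := by
        have := congrArg (β • ·) eq2; simpa [smul_sub, smul_smul, mul_comm] using this
      have e3 : (α*α + β*β) • M (1,0) (1,0) = 0 := by
        calc (α*α + β*β) • M (1,0) (1,0)
            = ((α*α) • M (1,0) (1,0) + (α*β) • M (1,0) d₂)
              - ((α*β) • M (1,0) d₂ - (β*β) • M (1,0) (1,0)) := by module
          _ = 0 := by rw [e1, e2, sub_zero]
      exact (smul_eq_zero.mp e3).resolve_left hss
    have hB : M (1,0) d₂ = 0 := by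
      have e1 : (α*β) • M (1,0) (1,0) + (β*β) • M (1,0) d₂ = 0 := by
        have := congrArg (β • ·) eq1; simpa [smul_add, smul_smul, mul_comm] using this
      have e2 : (α*α) • M (1,0) d₂ - (α*β) • M (1,0) (1,0) = 0 := by
        have := congrArg (α • ·) eq2; simpa [smul_sub, smul_smul] using this
      have e3 : (α*α + β*β) • M (1,0) d₂ = 0 := by
        calc (α*α + β*β) • M (1,0) d₂
            = ((α*α) • M (1,0) d₂ - (α*β) • M (1,0) (1,0))
              + ((α*β) • M (1,0) (1,0) + (β*β) • M (1,0) d₂) := by module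
          _ = 0 := by rw [e1, e2, add_zero]
      exact (smul_eq_zero.mp e3).resolve_left hss
    have hC : M d₂ d₂ = 0 := by
      have := htr; rw [hA] at this; simpa using this
    have hB' : M d₂ (1,0) = 0 := by rw [hsym d₂ (1,0)]; exact hB
    refine ContinuousLinearMap.ext fun z => ContinuousLinearMap.ext fun e => ?_
    have hMe : ∀ u : ℝ × ℝ, M u e
        = (e.1 - (e.2/d₂.2) * d₂.1) • M u (1,0) + (e.2/d₂.2) • M u d₂ := by
      intro u
      conv_lhs => rw [hdec e]
      rw [_root_.map_add, _root_.map_smul, _root_.map_smul]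
    have h1 : M z e = (z.1 - (z.2/d₂.2) * d₂.1) • M (1,0) e + (z.2/d₂.2) • M d₂ e := by
      conv_lhs => rw [hdec z]
      rw [_root_.map_add, _root_.map_smul, _root_.map_smul]
      rfl
    rw [h1, hMe (1,0), hMe d₂, hA, hB, hB', hC]
    simp
  -- the derivative is constant on QQ
  have h11Q : ((1:ℝ),(1:ℝ)) ∈ QQ := ⟨one_pos, one_pos⟩
  set C := Φ (1,1) with hC
  have hΦconst : ∀ x ∈ QQ, Φ x = C := by
    intro x hx
    refine QQ_conv.is_const_of_fderivWithin_eq_zero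
      (fun y hy => (hΦdiff y hy).differentiableWithinAt) ?_ hx h11Q
    intro y hy
    rw [fderivWithin_of_isOpen QQ_open hy]
    exact hM0 y hy
  -- G is affine on QQ
  have hGaff : ∀ x ∈ QQ, G x - C x = G (1,1) - C (1,1) := by
    intro x hx
    refine QQ_conv.is_const_of_fderivWithin_eq_zero (f := fun y => G y - C y)
      (fun y hy => ((hdiff y hy).sub C.differentiableAt).differentiableWithinAt) ?_ hx h11Q
    intro y hy
    rw [fderivWithin_of_isOpen QQ_open hy]
    have h1 : HasFDerivAt (fun y => G y - C y) (Φ y - C) y := (hfd y hy).sub C.hasFDerivAt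
    rw [h1.fderiv, hΦconst y hy]
    simp
  -- the affine constant vanishes by homogeneity
  have hk : G ((1:ℝ),(1:ℝ)) = C (1,1) := by
    have h2 := hGaff ((2:ℝ),(2:ℝ)) ⟨two_pos, two_pos⟩
    have hsm : ((2:ℝ),(2:ℝ)) = (2:ℝ) • ((1:ℝ),(1:ℝ)) := by rw [Prod.smul_mk]; norm_num
    have hG2 : G ((2:ℝ),(2:ℝ)) = (2:ℝ) • G (1,1) := by
      rw [hsm]; exact hhom (1,1) ⟨zero_le_one, zero_le_one⟩ 2 two_pos
    have hC2 : C ((2:ℝ),(2:ℝ)) = (2:ℝ) • C (1,1) := by rw [hsm, _root_.map_smul]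
    rw [hG2, hC2, ← smul_sub] at h2
    have h3 : G ((1:ℝ),(1:ℝ)) - C (1,1) = 0 := by
      have h4 := h2
      rw [two_smul] at h4
      exact (add_eq_left).mp h4
    exact sub_eq_zero.mp h3
  have hGC : ∀ x ∈ QQ, G x = C x := by
    intro x hx
    have h := hGaff x hx
    rw [hk, sub_self] at h
    exact sub_eq_zero.mp h
  -- conclude
  refine ⟨C (1,0), C (0,1), ?_⟩
  have hCdec : ∀ y : ℝ × ℝ, C y = y.1 • C (1,0) + y.2 • C (0,1) := by
    intro y
    have h : y = y.1 • ((1:ℝ),(0:ℝ)) + y.2 • ((0:ℝ),(1:ℝ)) := by apply Prod.ext <;> simp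
    conv_lhs => rw [h]
    rw [_root_.map_add, _root_.map_smul, _root_.map_smul]
  intro y hy
  rcases eq_or_ne y 0 with rfl | hy0
  · have h0 : G 0 = (2:ℝ) • G 0 := by
      have := hhom 0 ⟨le_rfl, le_rfl⟩ 2 two_pos
      rwa [smul_zero] at this
    have : G 0 = 0 := by
      rw [two_smul] at h0
      exact ((add_eq_left).mp h0.symm)
    simp [this]
  · -- approximate from the open quadrant
    have hyS : y ∈ SQ \ {0} := ⟨hy, hy0⟩
    have hmap : Filter.Tendsto (fun t : ℝ => y + t • ((1:ℝ),(1:ℝ)))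
        (nhdsWithin 0 (Set.Ioi 0)) (nhds y) := by
      have hcont : Continuous fun t : ℝ => y + t • ((1:ℝ),(1:ℝ)) :=
        continuous_const.add (continuous_id.smul continuous_const)
      have h := hcont.tendsto 0
      simp only [zero_smul, add_zero] at h
      exact h.mono_left nhdsWithin_le_nhds
    have hmem : ∀ t : ℝ, t ∈ Set.Ioi (0:ℝ) → y + t • ((1:ℝ),(1:ℝ)) ∈ QQ := by
      intro t ht
      exact ⟨by simpa using add_pos_of_nonneg_of_pos hy.1 ht, by simpa using add_pos_of_nonneg_of_pos hy.2 ht⟩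
    have hG1 : Filter.Tendsto (fun t : ℝ => G (y + t • ((1:ℝ),(1:ℝ))))
        (nhdsWithin 0 (Set.Ioi 0)) (nhds (G y)) := by
      have hcw : ContinuousWithinAt G (SQ \ {0}) y := (hG.continuousOn).continuousWithinAt hyS
      refine hcw.tendsto.comp ?_
      rw [tendsto_nhdsWithin_iff]
      refine ⟨hmap, ?_⟩
      filter_upwards [eventually_mem_nhdsWithin] with t ht
      exact QQ_sub (hmem t ht)
    have hG2 : Filter.Tendsto (fun t : ℝ => C (y + t • ((1:ℝ),(1:ℝ))))
        (nhdsWithin 0 (Set.Ioi 0)) (nhds (C y)) :=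
      (C.continuous.tendsto y).comp hmap
    have heq : (fun t : ℝ => G (y + t • ((1:ℝ),(1:ℝ))))
        =ᶠ[nhdsWithin 0 (Set.Ioi 0)] (fun t : ℝ => C (y + t • ((1:ℝ),(1:ℝ)))) := by
      filter_upwards [eventually_mem_nhdsWithin] with t ht
      exact hGC _ (hmem t ht)
    have : G y = C y := tendsto_nhds_unique (hG1.congr' heq) hG2
    rw [this, hCdec y]
end Core


/-! ### Linearity on each wedge -/

lemma tpa_mem_W (a b : Fin 4) : tp a ∈ Wdg a b :=
  ⟨1, 0, zero_le_one, le_rfl, by simp⟩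

lemma tpb_mem_W (a b : Fin 4) : tp b ∈ Wdg a b :=
  ⟨0, 1, le_rfl, zero_le_one, by simp⟩

set_option maxHeartbeats 1000000 in
lemma wedge_lemma (v : Fin 4 → Fin 4 → E3 → E3) (a b : Fin 4) (hab : a ≠ b)
    (hsm : ContDiffOn ℝ (⊤ : ℕ∞) (v a b) (Wdg a b \ {0}))
    (hlapv : ∀ x ∈ Wdg a b \ {0}, lapT a b (v a b) (Wdg a b) x = 0)
    (hhomv : ∀ x ∈ Wdg a b, ∀ lam : ℝ, 0 < lam → v a b (lam • x) = lam • v a b x) :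
    (∀ s t : ℝ, 0 ≤ s → 0 ≤ t →
        v a b (s • tp a + t • tp b) = s • v a b (tp a) + t • v a b (tp b))
    ∧ lineDerivWithin ℝ (v a b) (Wdg a b) (tp a) (conormal a b)
        = (-(2*Real.sqrt 2)⁻¹) • v a b (tp a) + (-(3*(2*Real.sqrt 2)⁻¹)) • v a b (tp b) := by
  have hs2 : (0:ℝ) < Real.sqrt 2 := Real.sqrt_pos.mpr (by norm_num)
  set L : ℝ × ℝ → E3 := fun p => p.1 • tp a + p.2 • tp b with hL
  have hLadd : ∀ (y d : ℝ × ℝ) (t : ℝ), L (y + t • d) = L y + t • L d := by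
    intro y d t
    simp only [hL, Prod.fst_add, Prod.snd_add, Prod.smul_fst, Prod.smul_snd, smul_eq_mul]
    module
  have hLsmul : ∀ (y : ℝ × ℝ) (l : ℝ), L (l • y) = l • L y := by
    intro y l
    simp only [hL, Prod.smul_fst, Prod.smul_snd, smul_eq_mul]
    module
  have hLinj : Function.Injective L := by
    intro z z' hzz
    have hdd : (z.1 - z'.1) • tp a + (z.2 - z'.2) • tp b = 0 := by
      simp only [hL] at hzz
      linear_combination (norm := module) hzz
    have h1 : ⟪tp a, (z.1 - z'.1) • tp a + (z.2 - z'.2) • tp b⟫ = 0 := by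
      rw [hdd, inner_zero_right]
    have h2 : ⟪tp b, (z.1 - z'.1) • tp a + (z.2 - z'.2) • tp b⟫ = 0 := by
      rw [hdd, inner_zero_right]
    rw [inner_add_right, real_inner_smul_right, real_inner_smul_right, inner_tp a a,
      inner_tp a b, if_pos rfl, if_neg hab] at h1
    rw [inner_add_right, real_inner_smul_right, real_inner_smul_right, inner_tp b a,
      inner_tp b b, if_pos rfl, if_neg (Ne.symm hab)] at h2
    have hz1 : z.1 = z'.1 := by nlinarith [h1, h2]
    have hz2 : z.2 = z'.2 := by nlinarith [h1, h2]
    exact Prod.ext hz1 hz2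
  have hLW : ∀ z : ℝ × ℝ, L z ∈ Wdg a b ↔ z ∈ SQ := by
    intro z
    constructor
    · rintro ⟨s, t, hs, ht, heq⟩
      have hz : z = (s, t) := hLinj (by rw [heq])
      rw [hz]; exact ⟨hs, ht⟩
    · intro hz
      exact ⟨z.1, z.2, hz.1, hz.2, rfl⟩
  have hL0 : L 0 = 0 := by simp [hL]
  have hmemD : ∀ z : ℝ × ℝ, z ∈ SQ \ {0} → L z ∈ Wdg a b \ {0} := by
    intro z hz
    refine ⟨(hLW z).mpr hz.1, ?_⟩
    intro h0
    simp only [Set.mem_singleton_iff] at h0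
    exact hz.2 (by simp only [Set.mem_singleton_iff]; exact hLinj (h0.trans hL0.symm))
  have htr : ∀ (f : E3 → E3) (y d : ℝ × ℝ),
      lineDerivWithin ℝ f (Wdg a b) (L y) (L d) = lineDerivWithin ℝ (f ∘ L) SQ y d := by
    intro f y d
    have hfun : (fun t : ℝ => f (L y + t • L d)) = (fun t : ℝ => (f ∘ L) (y + t • d)) := by
      funext t; rw [← hLadd]; rfl
    have hset : ((fun t : ℝ => L y + t • L d) ⁻¹' (Wdg a b))
        = ((fun t : ℝ => y + t • d) ⁻¹' SQ) := by
      ext t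
      simp only [Set.mem_preimage]
      rw [← hLadd]
      exact hLW _
    unfold lineDerivWithin
    rw [hfun, hset]
  have hLcd : ContDiff ℝ (⊤ : ℕ∞) L :=
    (contDiff_fst.smul contDiff_const).add (contDiff_snd.smul contDiff_const)
  have hGsm : ContDiffOn ℝ (⊤ : ℕ∞) (v a b ∘ L) (SQ \ {0}) :=
    ContDiffOn.comp hsm hLcd.contDiffOn hmemD
  have hGhom : ∀ y ∈ SQ, ∀ l : ℝ, 0 < l → (v a b ∘ L) (l • y) = l • (v a b ∘ L) y := by
    intro y hy l hl
    simp only [Function.comp_apply, hLsmul]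
    exact hhomv (L y) ((hLW y).mpr hy) l hl
  have e1 : tp a = L (1, 0) := by simp [hL]
  set τ : ℝ × ℝ := ((2 * Real.sqrt 2)⁻¹, 3 * (2 * Real.sqrt 2)⁻¹) with hτ
  have e2 : tang a b = L τ := by
    rw [tang]; simp only [hL, hτ]; module
  have hGlap : ∀ x ∈ SQ \ {0},
      lineDerivWithin ℝ (fun z => lineDerivWithin ℝ (v a b ∘ L) SQ z (1,0)) SQ x (1,0)
      + lineDerivWithin ℝ (fun z => lineDerivWithin ℝ (v a b ∘ L) SQ z τ) SQ x τ = 0 := by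
    intro x hx
    have h := hlapv (L x) (hmemD x hx)
    unfold lapT at h
    rw [e1, e2, htr, htr] at h
    have hf1 : ((fun y => lineDerivWithin ℝ (v a b) (Wdg a b) y (L (1,0))) ∘ L)
        = (fun w => lineDerivWithin ℝ (v a b ∘ L) SQ w (1,0)) := funext fun w => htr _ w _
    have hf2 : ((fun y => lineDerivWithin ℝ (v a b) (Wdg a b) y (L τ)) ∘ L)
        = (fun w => lineDerivWithin ℝ (v a b ∘ L) SQ w τ) := funext fun w => htr _ w _
    rw [hf1, hf2] at h
    exact h
  have hd2 : τ.2 ≠ 0 := by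
    simp only [hτ]
    positivity
  obtain ⟨c₁, c₂, hc⟩ := core (v a b ∘ L) τ hd2 hGsm hGhom hGlap
  have hL10 : L (1, 0) = tp a := by simp [hL]
  have hL01 : L (0, 1) = tp b := by simp [hL]
  have hva : c₁ = v a b (tp a) := by
    have h := hc (1, 0) ⟨zero_le_one, le_rfl⟩
    simp only [Function.comp_apply, hL10, one_smul, zero_smul, add_zero] at h
    exact h.symm
  have hvb : c₂ = v a b (tp b) := by
    have h := hc (0, 1) ⟨le_rfl, zero_le_one⟩
    simp only [Function.comp_apply, hL01, one_smul, zero_smul, zero_add] at h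
    exact h.symm
  have hlin : ∀ s t : ℝ, 0 ≤ s → 0 ≤ t →
      v a b (s • tp a + t • tp b) = s • v a b (tp a) + t • v a b (tp b) := by
    intro s t hs ht
    have h := hc (s, t) ⟨hs, ht⟩
    rw [hva, hvb] at h
    simpa only [Function.comp_apply, hL] using h
  refine ⟨hlin, ?_⟩
  have econ : conormal a b = L (-τ) := by
    rw [conormal, e2]
    have h := hLsmul τ (-1)
    simp only [neg_smul, one_smul] at h
    rw [h]
  have hstep : lineDerivWithin ℝ (v a b) (Wdg a b) (tp a) (conormal a b)
      = lineDerivWithin ℝ (v a b ∘ L) SQ (1,0) (-τ) := by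
    rw [e1, econ, htr]
  rw [hstep]
  unfold lineDerivWithin
  have hcpos : 0 < (2 * Real.sqrt 2)⁻¹ := by positivity
  have hsetI : ((fun t : ℝ => ((1:ℝ),(0:ℝ)) + t • (-τ)) ⁻¹' SQ) = Set.Iic 0 := by
    ext t
    simp only [Set.mem_preimage, Set.mem_Iic, SQ, Set.mem_setOf_eq, Prod.fst_add,
      Prod.snd_add, Prod.smul_fst, Prod.smul_snd, Prod.fst_neg, Prod.snd_neg, hτ,
      smul_eq_mul]
    constructor
    · intro ht
      nlinarith [ht.2, hcpos]
    · intro ht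
      constructor
      · nlinarith [hcpos]
      · nlinarith [hcpos]
  rw [hsetI]
  set w : E3 := (-(2*Real.sqrt 2)⁻¹) • v a b (tp a) + (-(3*(2*Real.sqrt 2)⁻¹)) • v a b (tp b)
    with hw
  have heqon : Set.EqOn (fun t : ℝ => (v a b ∘ L) (((1:ℝ),(0:ℝ)) + t • (-τ)))
      (fun t : ℝ => v a b (tp a) + t • w) (Set.Iic 0) := by
    intro t ht
    simp only [Set.mem_Iic] at ht
    have hcoords : ((1:ℝ),(0:ℝ)) + t • (-τ)
        = ((1 - t * (2*Real.sqrt 2)⁻¹ : ℝ), (-(3 * (2*Real.sqrt 2)⁻¹ * t) : ℝ)) := by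
      apply Prod.ext <;> simp [hτ] <;> ring
    have h1 : (0:ℝ) ≤ 1 - t * (2*Real.sqrt 2)⁻¹ := by nlinarith [hcpos]
    have h2 : (0:ℝ) ≤ -(3 * (2*Real.sqrt 2)⁻¹ * t) := by nlinarith [hcpos]
    simp only [Function.comp_apply, hcoords]
    have := hlin _ _ h1 h2
    simp only [hL] at this ⊢
    rw [this, hw]
    module
  have hat0 : (fun t : ℝ => (v a b ∘ L) (((1:ℝ),(0:ℝ)) + t • (-τ))) 0
      = (fun t : ℝ => v a b (tp a) + t • w) 0 :=
    heqon Set.self_mem_Iic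
  rw [derivWithin_congr heqon hat0]
  have hder : HasDerivWithinAt (fun t : ℝ => v a b (tp a) + t • w) w (Set.Iic 0) 0 := by
    have h := ((hasDerivAt_id (0:ℝ)).smul_const w).const_add (v a b (tp a))
    simpa using h.hasDerivWithinAt
  rw [hder.derivWithin (uniqueDiffOn_Iic 0 0 Set.self_mem_Iic)]

/-! ### The main theorem -/

set_option maxHeartbeats 1000000 in
/-- One-homogeneous compatible Jacobi fields on the tetrahedral cone are generated by a
single rotation. -/
theorem one_homogeneous_jacobi_field_generated_by_rotation
    (v : Fin 4 → Fin 4 → E3 → E3)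
    (hjac : IsCompatibleJacobiT v)
    (hhom : IsHomogeneousOneT v) :
    ∃ A : E3 →ₗ[ℝ] E3, IsSkew A ∧
      ∀ a b : Fin 4, a ≠ b →
        ∀ x ∈ Wdg a b, v a b x = (Submodule.orthogonalProjectionOnto (Pl a b)ᗮ (A x) : E3) := by
  obtain ⟨hsymm, hperp, hsm, hlapH, hval, hfluxH⟩ := hjac
  have W := fun (a b : Fin 4) (hab : a ≠ b) =>
    wedge_lemma v a b hab (hsm a b hab) (hlapH a b hab) (hhom a b hab)
  set X : Fin 4 → Fin 4 → ℝ := fun a b => ⟪v a b (tp a), Nu a b⟫ with hXdef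
  have hXeq : ∀ a b : Fin 4, X a b = ⟪v a b (tp a), Nu a b⟫ := fun a b => rfl
  have hu : ∀ a b : Fin 4, a ≠ b → v a b (tp a) = X a b • Nu a b := by
    intro a b hab
    obtain ⟨cc, hcc⟩ := (mem_perp_iff hab _).mp (hperp a b hab (tp a) (tpa_mem_W a b))
    have hXc : X a b = cc := by
      rw [hXeq, hcc, real_inner_smul_left, nu_unit a b hab, mul_one]
    rw [hXc]
    exact hcc
  have hub : ∀ a b : Fin 4, a ≠ b → v a b (tp b) = X b a • Nu b a := by
    intro a b hab
    rw [hsymm a b (tp b) (tpb_mem_W a b)]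
    exact hu b a (Ne.symm hab)
  have hray : ∀ a : Fin 4, tp a ∈ ray a \ {0} :=
    fun a => ⟨⟨1, zero_le_one, (one_smul ℝ (tp a)).symm⟩, by simpa using tp_ne a⟩
  -- row sums vanish (condition (B))
  have hrow : ∀ a b b' b'' : Fin 4, a ≠ b → a ≠ b' → a ≠ b'' → b ≠ b' → b ≠ b'' → b' ≠ b'' →
      X a b + X a b' + X a b'' = 0 := by
    intro a b b' b'' h1 h2 h3 h4 h5 h6
    obtain ⟨V, hV⟩ := hval a (tp a) (hray a)
    have hXV : ∀ bb : Fin 4, a ≠ bb → X a bb = ⟪V, Nu a bb⟫ := by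
      intro bb hbb
      rw [hXeq, hV bb (Ne.symm hbb), proj_perp hbb, real_inner_smul_left,
        nu_unit a bb hbb, mul_one, real_inner_comm]
    rw [hXV b h1, hXV b' h2, hXV b'' h3, ← inner_add_right, ← inner_add_right,
      nu_sum h1 h2 h3 h4 h5 h6, inner_zero_right]
  -- flux relations (condition (C))
  have herase : ∀ a b b' b'' : Fin 4, a ≠ b → a ≠ b' → a ≠ b'' → b ≠ b' → b ≠ b'' → b' ≠ b'' →
      Finset.univ.erase a = ({b, b', b''} : Finset (Fin 4)) := by decide
  have hP : ∀ a b b' b'' : Fin 4, a ≠ b → a ≠ b' → a ≠ b'' → b ≠ b' → b ≠ b'' → b' ≠ b'' →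
      (X a b - 3 * X b a) = (X a b' - 3 * X b' a)
      ∧ (X a b' - 3 * X b' a) = (X a b'' - 3 * X b'' a) := by
    intro a b b' b'' h1 h2 h3 h4 h5 h6
    have h := hfluxH a (tp a) (hray a)
    rw [herase a b b' b'' h1 h2 h3 h4 h5 h6] at h
    rw [Finset.sum_insert (by simp [h4, h5]), Finset.sum_insert (by simp [h6]),
      Finset.sum_singleton] at h
    have hterm : ∀ bb : Fin 4, a ≠ bb →
        lineDerivWithin ℝ (v a bb) (Wdg a bb) (tp a) (conormal a bb)
        = (-(2*Real.sqrt 2)⁻¹) • ((X a bb - 3 * X bb a) • Nu a bb) := by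
      intro bb hbb
      rw [(W a bb hbb).2, hu a bb hbb, hub a bb hbb, nu_ba a bb]
      module
    rw [hterm b h1, hterm b' h2, hterm b'' h3, ← smul_add, ← smul_add] at h
    have hk : -(2*Real.sqrt 2)⁻¹ ≠ 0 := by
      have hs2 : (0:ℝ) < Real.sqrt 2 := Real.sqrt_pos.mpr (by norm_num)
      simp only [neg_ne_zero]
      positivity
    have h' := (smul_eq_zero.mp h).resolve_left hk
    rw [← add_assoc] at h'
    exact three_rel h1 h2 h3 h4 h5 h6 h'
  have hRel : ∀ a b b' : Fin 4, a ≠ b → a ≠ b' → b ≠ b' →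
      X a b - 3 * X b a = X a b' - 3 * X b' a := by
    intro a b b' h1 h2 h3
    obtain ⟨b'', h4, h5, h6⟩ := (by decide :
      ∀ a b b' : Fin 4, a ≠ b → a ≠ b' → b ≠ b' →
        ∃ b'' : Fin 4, a ≠ b'' ∧ b ≠ b'' ∧ b' ≠ b'') a b b' h1 h2 h3
    exact (hP a b b' b'' h1 h2 h4 h3 h5 h6).1
  -- the four junction constants
  set T : Fin 4 → ℝ := fun i =>
    if i = 0 then X 0 1 - 3 * X 1 0
    else if i = 1 then X 1 0 - 3 * X 0 1
    else if i = 2 then X 2 0 - 3 * X 0 2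
    else X 3 0 - 3 * X 0 3 with hTdef
  have hT0 : T 0 = X 0 1 - 3 * X 1 0 := by simp [hTdef]
  have hT1 : T 1 = X 1 0 - 3 * X 0 1 := by simp [hTdef]
  have hT2 : T 2 = X 2 0 - 3 * X 0 2 := by simp [hTdef]
  have hT3 : T 3 = X 3 0 - 3 * X 0 3 := by simp [hTdef]
  have hcases : ∀ a : Fin 4, a = 0 ∨ a = 1 ∨ a = 2 ∨ a = 3 := by decide
  have hT : ∀ a b : Fin 4, a ≠ b → X a b - 3 * X b a = T a := by
    intro a b hab
    rcases hcases a with rfl|rfl|rfl|rfl <;> rcases hcases b with rfl|rfl|rfl|rfl <;>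
      first
      | exact absurd rfl hab
      | (rw [hT0]; exact hRel 0 _ 1 (by decide) (by decide) (by decide))
      | (rw [hT1]; exact hRel 1 _ 0 (by decide) (by decide) (by decide))
      | (rw [hT2]; exact hRel 2 _ 0 (by decide) (by decide) (by decide))
      | (rw [hT3]; exact hRel 3 _ 0 (by decide) (by decide) (by decide))
      | rw [hT0]
      | rw [hT1]
      | rw [hT2]
      | rw [hT3]
  have hTsum : T 0 + T 1 + T 2 + T 3 = 0 := by
    have R0 := hrow 0 1 2 3 (by decide) (by decide) (by decide) (by decide) (by decide) (by decide)
    have R1 := hrow 1 0 2 3 (by decide) (by decide) (by decide) (by decide) (by decide) (by decide)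
    have R2 := hrow 2 0 1 3 (by decide) (by decide) (by decide) (by decide) (by decide) (by decide)
    have R3 := hrow 3 0 1 2 (by decide) (by decide) (by decide) (by decide) (by decide) (by decide)
    have F02 := hRel 0 1 2 (by decide) (by decide) (by decide)
    have F03 := hRel 0 1 3 (by decide) (by decide) (by decide)
    have F12 := hRel 1 0 2 (by decide) (by decide) (by decide)
    have F13 := hRel 1 0 3 (by decide) (by decide) (by decide)
    have F21 := hRel 2 0 1 (by decide) (by decide) (by decide)
    have F23 := hRel 2 0 3 (by decide) (by decide) (by decide)
    have F31 := hRel 3 0 1 (by decide) (by decide) (by decide)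
    have F32 := hRel 3 0 2 (by decide) (by decide) (by decide)
    rw [hT0, hT1, hT2, hT3]
    linarith
  have hXT : ∀ a b : Fin 4, a ≠ b → X a b = -(T a + 3 * T b)/8 := by
    intro a b hab
    have h1 := hT a b hab
    have h2 := hT b a (Ne.symm hab)
    linarith
  -- the rotation vector
  set ω : E3 := (3 * Real.sqrt 2 / 16) • (T 0 • tp 0 + T 1 • tp 1 + T 2 • tp 2 + T 3 • tp 3)
    with hω
  have hωp : ∀ c : Fin 4, ⟪ω, tp c⟫ = (Real.sqrt 2 / 4) * T c := by
    intro c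
    rw [hω, real_inner_smul_left, inner_add_left, inner_add_left, inner_add_left,
      real_inner_smul_left, real_inner_smul_left, real_inner_smul_left, real_inner_smul_left]
    rcases hcases c with rfl|rfl|rfl|rfl <;>
      simp only [inner_tp, Fin.reduceEq, reduceIte, if_true, if_pos rfl] <;>
      linear_combination (-(Real.sqrt 2)/16) * hTsum
  -- the skew map
  refine ⟨LinearMap.mk (AddHom.mk (fun x => crs ω x) (fun x y => crs_add_right ω x y))
    (fun c x => by simpa using crs_smul_right c ω x), fun x y => crs_skew ω x y, ?_⟩
  intro a b hab x hx
  obtain ⟨s, t, hs, ht, rfl⟩ := hx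
  rw [(W a b hab).1 s t hs ht, proj_perp hab]
  have hAx : crs ω (s • tp a + t • tp b) = s • crs ω (tp a) + t • crs ω (tp b) := by
    rw [crs_add_right, crs_smul_right, crs_smul_right]
  have hs2 : Real.sqrt 2 ≠ 0 := ne_of_gt (Real.sqrt_pos.mpr (by norm_num))
  have key1 : ⟪crs ω (tp a), Nu a b⟫ = X a b := by
    rw [Nu, real_inner_smul_right, crs_dot_crs, hωp a, hωp b, inner_tp a b, inner_tp a a,
      if_neg hab, if_pos rfl, hXT a b hab]
    field_simp
    ring
  have key2 : ⟪crs ω (tp b), Nu a b⟫ = -(X b a) := by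
    rw [Nu, real_inner_smul_right, crs_dot_crs, hωp a, hωp b, inner_tp b b, inner_tp b a,
      if_pos rfl, if_neg (Ne.symm hab), hXT b a (Ne.symm hab)]
    field_simp
    ring
  have hcoe : (LinearMap.mk (AddHom.mk (fun x => crs ω x) (fun x y => crs_add_right ω x y))
      (fun c x => by simpa using crs_smul_right c ω x) : E3 →ₗ[ℝ] E3) (s • tp a + t • tp b)
      = crs ω (s • tp a + t • tp b) := rfl
  rw [hcoe, hAx, inner_add_left, real_inner_smul_left, real_inner_smul_left, key1, key2,
    hu a b hab, hub a b hab, nu_ba a b]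
  module
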